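/- arXiv:0809.1891 — 4 statements merged into one kernel-verified Lean document; each statement's English description precedes it below -/
import Mathlib

section
/- The T-basically full closure is idempotent: for any ideals I and T of a commutative ring R, setting I^{Tbf} = (TI : T), one has (T·I^{Tbf} : T) = I^{Tbf}. -/
theorem Submodule.smul_le_iff_le_colon {R M : Type*} [Semiring R] [AddCommMonoid M] [Module R M]
    {I : Ideal R} {N P : Submodule R M} : I • N ≤ P ↔ I ≤ P.colon N := by
  rw [Submodule.smul_le]
  exact forall₂_congr fun _ _ => Submodule.mem_colon.symm

theorem Ideal.gc_mul_colon {R : Type*} [CommSemiring R] (T : Ideal R) :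
    GaloisConnection (T * ·) (fun J => J.colon T) := fun I J => by
  change T * I ≤ J ↔ _
  rw [mul_comm]
  exact Submodule.smul_le_iff_le_colon

/-- The `T`-basically full closure is idempotent. -/
theorem T_basically_full_closure_idem {R : Type*} [CommRing R] (T I : Ideal R) :
    (T * ((T * I).colon T)).colon T = (T * I).colon T :=
  (Ideal.gc_mul_colon T).u_l_u_eq_u (T * I)
end

section
/- Let R be a Noetherian local domain with maximal ideal m and let T be a nonzero ideal. If I is an m-primary ideal, then the T-basically full closure (TI : T) is contained in the integral closure of I. -/
/-- `u` is integral over the ideal `I`: it satisfies an equation of integral dependence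
`u^n + a_1 u^{n-1} + ⋯ + a_n = 0` with `a_i ∈ I^i`. -/
def IsIntegralOverIdeal {R : Type*} [CommRing R] (I : Ideal R) (u : R) : Prop :=
  ∃ n : ℕ, 0 < n ∧ ∃ a : ℕ → R, (∀ i, 1 ≤ i → i ≤ n → a i ∈ I ^ i) ∧
    u ^ n + ∑ i ∈ Finset.Icc 1 n, a i * u ^ (n - i) = 0

/-!
Determinant trick: multiplication by `u ∈ (TI : T)` maps the finitely generated module `T` into
`I T`, so by Cayley–Hamilton it satisfies a monic `p` whose coefficient in degree `k` lies in
`I ^ (deg p - k)`. Then `p(u)` kills `T`, which is faithful because `R` is a domain and `T ≠ 0`;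
hence `p(u) = 0` is an equation of integral dependence of `u` over `I`.
-/

open Polynomial

section

variable {R : Type*} [CommRing R]

theorem isIntegralOverIdeal_of_monic_of_eval_eq_zero {I : Ideal R} {u : R} {p : R[X]}
    (hp : p.Monic) (hcoeff : ∀ k, p.coeff k ∈ I ^ (p.natDegree - k)) (hpu : p.eval u = 0) :
    IsIntegralOverIdeal I u := by
  cases subsingleton_or_nontrivial R
  · exact ⟨1, one_pos, 0, by simp, Subsingleton.elim _ _⟩
  set n := p.natDegree
  have hn : 0 < n := by
    refine Nat.pos_of_ne_zero fun h ↦ one_ne_zero (α := R) ?_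
    rwa [hp.natDegree_eq_zero.mp h, eval_one] at hpu
  refine ⟨n, hn, fun i ↦ p.coeff (n - i), fun i _ hin ↦ ?_, ?_⟩
  · simpa [Nat.sub_sub_self hin] using hcoeff (n - i)
  have hreindex : ∑ i ∈ Finset.Icc 1 n, p.coeff (n - i) * u ^ (n - i)
      = ∑ k ∈ Finset.range n, p.coeff k * u ^ k :=
    Finset.sum_nbij' (fun i ↦ n - i) (fun k ↦ n - k) (fun i hi ↦ by simp at hi ⊢; omega)
      (fun k hk ↦ by simp at hk ⊢; omega) (fun i hi ↦ by simp at hi; omega)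
      (fun k hk ↦ by simp at hk; omega) (fun _ _ ↦ rfl)
  rw [hreindex, add_comm, ← hpu, eval_eq_sum_range, Finset.sum_range_succ, hp.coeff_natDegree,
    one_mul]

theorem isIntegralOverIdeal_of_forall_smul_mem_smul_top {M : Type*} [AddCommGroup M] [Module R M]
    [Module.Finite R M] [FaithfulSMul R M] {I : Ideal R} {u : R}
    (hu : ∀ m : M, u • m ∈ I • (⊤ : Submodule R M)) : IsIntegralOverIdeal I u := by
  obtain ⟨p, hp, -, hcoeff, hpf⟩ :=
    LinearMap.exists_monic_and_natDegree_eq_and_coeff_mem_pow_and_aeval_eq_zero R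
      (Algebra.lsmul R R M u) I (by rintro _ ⟨m, rfl⟩; exact hu m)
  refine isIntegralOverIdeal_of_monic_of_eval_eq_zero hp hcoeff (FaithfulSMul.eq_of_smul_eq_smul
    (M := R) (α := M) fun m ↦ ?_)
  rw [aeval_algHom_apply] at hpf
  simpa [coe_aeval_eq_eval] using congrArg (· m) hpf

theorem Ideal.faithfulSMul_of_ne_bot [IsDomain R] {T : Ideal R} (hT : T ≠ ⊥) :
    FaithfulSMul R T := by
  obtain ⟨t, htT, ht⟩ := Submodule.exists_mem_ne_zero_of_ne_bot hT
  exact ⟨fun h ↦ mul_right_cancel₀ ht (congrArg Subtype.val (h ⟨t, htT⟩))⟩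

theorem Ideal.smul_mem_smul_top_of_mem_colon {T I : Ideal R} {u : R} (hu : u ∈ (T * I).colon T)
    (t : T) : u • t ∈ I • (⊤ : Submodule R T) := by
  rw [Submodule.mem_smul_top_iff, Submodule.coe_smul, smul_eq_mul, Ideal.mul_comm]
  exact Submodule.mem_colon.mp hu t t.2

end

theorem T_basically_full_closure_le_integralClosure_general {R : Type*} [CommRing R] [IsDomain R]
    [IsNoetherianRing R] (T I : Ideal R) (hT : T ≠ ⊥) :
    ∀ u ∈ (T * I).colon T, IsIntegralOverIdeal I u := by
  intro u hu
  have : FaithfulSMul R T := Ideal.faithfulSMul_of_ne_bot hT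
  exact isIntegralOverIdeal_of_forall_smul_mem_smul_top (Ideal.smul_mem_smul_top_of_mem_colon hu)

/-- Let `R` be a Noetherian local domain with maximal ideal `m` and `T` a nonzero ideal.
If `I` is an `m`-primary ideal, then the `T`-basically full closure `(TI : T)` is contained
in the integral closure of `I`. -/
theorem T_basically_full_closure_le_integralClosure {R : Type*} [CommRing R] [IsDomain R]
    [IsNoetherianRing R] [IsLocalRing R] (T I : Ideal R) (hT : T ≠ ⊥)
    (hIprim : I.IsPrimary) (hIrad : I.radical = IsLocalRing.maximalIdeal R) :
    ∀ u ∈ (T * I).colon T, IsIntegralOverIdeal I u :=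
  T_basically_full_closure_le_integralClosure_general T I hT
end

section
/- In R = k[[t^2, t^5]] with maximal ideal m = (t^2, t^5), for every n ≥ 4 one has (m·(t^n) : m) = (t^n, t^{n+3}) as ideals of R. -/
/-- The subalgebra of `k[[t]]` of power series supported on the numerical semigroup `S`. -/
def sgRing (k : Type*) [Field k] (S : AddSubmonoid ℕ) : Subalgebra k (PowerSeries k) where
  carrier := {f | ∀ n, PowerSeries.coeff n f ≠ 0 → n ∈ S}
  zero_mem' := by intro n hn; simp at hn
  one_mem' := by
    intro n hn
    rw [PowerSeries.coeff_one] at hn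
    split_ifs at hn with h
    · exact h ▸ S.zero_mem
    · simp at hn
  add_mem' := by
    intro a b ha hb n hn
    rw [map_add] at hn
    by_cases h : PowerSeries.coeff n a ≠ 0
    · exact ha n h
    · push_neg at h
      exact hb n (by simpa [h] using hn)
  mul_mem' := by
    intro a b ha hb n hn
    rw [PowerSeries.coeff_mul] at hn
    obtain ⟨p, hp, hne⟩ := Finset.exists_ne_zero_of_sum_ne_zero hn
    rw [Finset.HasAntidiagonal.mem_antidiagonal] at hp
    exact hp ▸ S.add_mem (ha p.1 (left_ne_zero_of_mul hne)) (hb p.2 (right_ne_zero_of_mul hne))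
  algebraMap_mem' := by
    intro r n hn
    rw [show (algebraMap k (PowerSeries k)) r = PowerSeries.C r from rfl, PowerSeries.coeff_C] at hn
    split_ifs at hn with h
    · exact h ▸ S.zero_mem
    · simp at hn

/-- The monomial `t^n` as an element of the semigroup ring, for `n ∈ S`. -/
noncomputable def tp {k : Type*} [Field k] {S : AddSubmonoid ℕ} (n : ℕ) (hn : n ∈ S) : sgRing k S :=
  ⟨PowerSeries.X ^ n, by
    intro m hm
    rw [PowerSeries.coeff_X_pow] at hm
    split_ifs at hm with h
    · exact h ▸ hn
    · simp at hm⟩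

/-- The numerical semigroup generated by 2 and 5. -/
def S25 : AddSubmonoid ℕ := AddSubmonoid.closure {2, 5}

lemma two_mem_S25 : (2 : ℕ) ∈ S25 := AddSubmonoid.subset_closure (by simp)
lemma five_mem_S25 : (5 : ℕ) ∈ S25 := AddSubmonoid.subset_closure (by simp)

lemma mem_S25_of_four_le {n : ℕ} (h : 4 ≤ n) : n ∈ S25 := by
  have h2k : ∀ c : ℕ, c * 2 ∈ S25 := fun c => by
    simpa [smul_eq_mul] using AddSubmonoid.nsmul_mem S25 two_mem_S25 c
  rcases Nat.even_or_odd n with he | ho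
  · obtain ⟨c, hc⟩ := he
    have hn : n = c * 2 := by omega
    rw [hn]; exact h2k c
  · obtain ⟨c, hc⟩ := ho
    have hn : n = (c - 2) * 2 + 5 := by omega
    rw [hn]; exact S25.add_mem (h2k _) five_mem_S25

/-!
Write `S = ⟨2, 5⟩ = ℕ \ {1, 3}`. An element of the monomial ideal `(t^a, t^b)` of `k[[S]]`
is a series supported on `(a + S) ∪ (b + S)`. Since `m·(t^n) = (t^(n+2), t^(n+5))`, an element
`f` of the colon ideal satisfies `t²f ∈ (t^(n+2), t^(n+5))`, so `f` is supported on
`(n + S) ∪ (n + 3 + S)`, hence `f ∈ (t^n, t^(n+3))`. Conversely `t^(n+3)·t² = t^(n+5)` and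
`t^(n+3)·t⁵ = t⁶·t^(n+2)`.
-/

open PowerSeries

section Monomials

variable {k : Type*} [Field k] {S : AddSubmonoid ℕ}

@[simp]
lemma coe_tp (n : ℕ) (hn : n ∈ S) : ((tp n hn : sgRing k S) : PowerSeries k) = X ^ n := rfl

lemma tp_mul_tp {a b c : ℕ} (ha : a ∈ S) (hb : b ∈ S) (hc : c ∈ S) (h : a + b = c) :
    (tp a ha * tp b hb : sgRing k S) = tp c hc := by
  ext1
  simp only [MulMemClass.coe_mul, coe_tp, ← pow_add, h]

lemma span_tp_mul_span_tp_pair {a b c d e : ℕ} (ha : a ∈ S) (hb : b ∈ S) (hc : c ∈ S)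
    (hd : d ∈ S) (he : e ∈ S) (hcad : c + a = d) (hcbe : c + b = e) :
    (Ideal.span {tp c hc} * Ideal.span {tp a ha, tp b hb} : Ideal (sgRing k S)) =
      Ideal.span {tp d hd, tp e he} := by
  rw [Ideal.span_insert, Ideal.span_insert, Ideal.mul_sup,
    Ideal.span_singleton_mul_span_singleton, Ideal.span_singleton_mul_span_singleton,
    tp_mul_tp hc ha hd hcad, tp_mul_tp hc hb he hcbe]

lemma mem_span_tp_iff {a : ℕ} (ha : a ∈ S) {x : sgRing k S} :
    x ∈ Ideal.span {tp a ha} ↔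
      ∀ j, coeff j (x : PowerSeries k) ≠ 0 → ∃ s ∈ S, j = a + s := by
  constructor
  · rintro hx j hj
    obtain ⟨y, rfl⟩ := Ideal.mem_span_singleton'.mp hx
    rw [MulMemClass.coe_mul, coe_tp, coeff_mul_X_pow'] at hj
    split_ifs at hj with haj
    · exact ⟨j - a, y.2 _ hj, by omega⟩
    · exact absurd rfl hj
  · intro hx
    let g : PowerSeries k := mk fun j => coeff (a + j) (x : PowerSeries k)
    have hg : g ∈ sgRing k S := fun j hj => by
      obtain ⟨s, hs, hjs⟩ := hx _ (by simpa [g] using hj)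
      exact (by omega : j = s) ▸ hs
    refine Ideal.mem_span_singleton'.mpr ⟨⟨g, hg⟩, Subtype.ext (ext fun j => ?_)⟩
    rw [MulMemClass.coe_mul, coe_tp, coeff_mul_X_pow']
    split_ifs with haj
    · simp only [g, coeff_mk, Nat.add_sub_cancel' haj]
    · by_contra hj
      obtain ⟨s, -, rfl⟩ := hx j (Ne.symm hj)
      omega

lemma exists_of_coeff_ne_zero_of_mem_span_tp_pair {a b : ℕ} (ha : a ∈ S) (hb : b ∈ S)
    {x : sgRing k S} (hx : x ∈ Ideal.span {tp a ha, tp b hb}) {j : ℕ}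
    (hj : coeff j (x : PowerSeries k) ≠ 0) :
    (∃ s ∈ S, j = a + s) ∨ ∃ s ∈ S, j = b + s := by
  rw [Ideal.span_insert] at hx
  obtain ⟨y, hy, z, hz, rfl⟩ := Submodule.mem_sup.mp hx
  rw [AddMemClass.coe_add, map_add] at hj
  by_cases hyj : coeff j (y : PowerSeries k) = 0
  · exact Or.inr ((mem_span_tp_iff hb).mp hz j (by simpa [hyj] using hj))
  · exact Or.inl ((mem_span_tp_iff ha).mp hy j hyj)

lemma exists_of_coeff_ne_zero_of_mul_tp_mem {a b c d e : ℕ} (hc : c ∈ S) (hd : d ∈ S)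
    (he : e ∈ S) (hacd : a + c = d) (hbce : b + c = e) {x : sgRing k S}
    (hx : x * tp c hc ∈ Ideal.span {tp d hd, tp e he})
    {j : ℕ} (hj : coeff j (x : PowerSeries k) ≠ 0) :
    (∃ s ∈ S, j = a + s) ∨ ∃ s ∈ S, j = b + s := by
  have hjc : coeff (j + c) ((x * tp c hc : sgRing k S) : PowerSeries k) ≠ 0 := by
    rwa [MulMemClass.coe_mul, coe_tp, coeff_mul_X_pow]
  refine (exists_of_coeff_ne_zero_of_mem_span_tp_pair _ _ hx hjc).imp ?_ ?_ <;>
    exact fun ⟨s, hs, hjs⟩ => ⟨s, hs, by omega⟩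

lemma le_colon_of_mul_le {R : Type*} [CommSemiring R] {I J N : Ideal R} (h : J * I ≤ N) :
    J ≤ N.colon I :=
  fun _ hx => Submodule.mem_colon.mpr fun _ hy => h (Ideal.mul_mem_mul hx hy)

end Monomials

section TwoFive

lemma mem_S25_iff {n : ℕ} : n ∈ S25 ↔ n ≠ 1 ∧ n ≠ 3 := by
  refine ⟨fun h => ?_, fun h => ?_⟩
  · induction h using AddSubmonoid.closure_induction with
    | mem x hx => simp only [Set.mem_insert_iff, Set.mem_singleton_iff] at hx; omega
    | zero => omega
    | add x y _ _ hx hy => omega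
  · obtain rfl | rfl | h4 : n = 0 ∨ n = 2 ∨ 4 ≤ n := by omega
    · exact S25.zero_mem
    · exact two_mem_S25
    · exact mem_S25_of_four_le h4

lemma add_three_mem_S25 {s : ℕ} (hs : s ∈ S25) (h0 : s ≠ 0) : s + 3 ∈ S25 :=
  mem_S25_of_four_le (by have := mem_S25_iff.mp hs; omega)

variable {k : Type*} [Field k]

/-- Removing the `t^(a+3)`-term of `x` leaves a series supported on `a + S25`,
because `s + 3 ∈ S25` for every nonzero `s ∈ S25`. -/
lemma mem_span_tp_tp_add_three {a : ℕ} (ha : a ∈ S25) (ha3 : a + 3 ∈ S25) {x : sgRing k S25}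
    (hx : ∀ j, coeff j (x : PowerSeries k) ≠ 0 →
      (∃ s ∈ S25, j = a + s) ∨ ∃ s ∈ S25, j = a + 3 + s) :
    x ∈ Ideal.span {tp a ha, tp (a + 3) ha3} := by
  set c := coeff (a + 3) (x : PowerSeries k)
  have hrest : x - c • tp (a + 3) ha3 ∈ Ideal.span {tp a ha} := by
    refine (mem_span_tp_iff ha).mpr fun j hj => ?_
    rw [AddSubgroupClass.coe_sub, Subalgebra.coe_smul, coe_tp, map_sub, coeff_smul,
      coeff_X_pow] at hj
    by_cases hja : j = a + 3
    · subst hja; simp [c] at hj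
    · rw [if_neg hja, smul_zero, sub_zero] at hj
      rcases hx j hj with h | ⟨s, hs, rfl⟩
      · exact h
      · exact ⟨s + 3, add_three_mem_S25 hs (by omega), by omega⟩
  rw [Ideal.span_insert]
  exact Submodule.mem_sup.mpr ⟨_, hrest, _,
    Submodule.smul_of_tower_mem _ c (Ideal.mem_span_singleton_self _), sub_add_cancel _ _⟩

end TwoFive

/-- In `R = k[[t^2, t^5]]` with maximal ideal `m = (t^2, t^5)`, for every `n ≥ 4`,
`(m·(t^n) : m) = (t^n, t^{n+3})`. -/
theorem sgRing_two_five_colon_eq {k : Type*} [Field k] (n : ℕ) (hn : 4 ≤ n)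
    (m I J : Ideal (sgRing k S25))
    (hm : m = Ideal.span {tp 2 two_mem_S25, tp 5 five_mem_S25})
    (hI : I = Ideal.span {tp n (mem_S25_of_four_le hn)})
    (hJ : J = Ideal.span {tp n (mem_S25_of_four_le hn),
      tp (n + 3) (mem_S25_of_four_le (by omega))}) :
    (m * I).colon m = J := by
  subst hm hI hJ
  have h2 : n + 2 ∈ S25 := mem_S25_of_four_le (by omega)
  have h5 : n + 5 ∈ S25 := mem_S25_of_four_le (by omega)
  rw [mul_comm, span_tp_mul_span_tp_pair _ _ _ h2 h5 (by omega) (by omega)]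
  refine le_antisymm (fun x hx => mem_span_tp_tp_add_three _ _ fun j hj => ?_)
    (le_colon_of_mul_le ?_)
  · have hxt2 := Submodule.mem_colon.mp hx (tp 2 two_mem_S25) (Ideal.subset_span (by simp))
    exact exists_of_coeff_ne_zero_of_mul_tp_mem (b := n + 3) two_mem_S25 h2 h5 rfl (by omega)
      hxt2 hj
  · have h8 : n + 8 ∈ S25 := mem_S25_of_four_le (by omega)
    have h6 : 6 ∈ S25 := mem_S25_of_four_le (by omega)
    rw [Ideal.span_pair_mul_span_pair, Ideal.span_le]
    simp only [Set.insert_subset_iff, Set.singleton_subset_iff, SetLike.mem_coe]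
    rw [tp_mul_tp _ _ h2 rfl, tp_mul_tp _ _ h5 rfl, tp_mul_tp _ _ h5 (by omega),
      tp_mul_tp _ _ h8 (by omega), ← tp_mul_tp h6 h2 h8 (by omega)]
    exact ⟨Ideal.subset_span (by simp), Ideal.subset_span (by simp), Ideal.subset_span (by simp),
      Ideal.mul_mem_left _ _ (Ideal.subset_span (by simp))⟩
end

section
/- Let k = (ℤ/3ℤ)(u,v,w) and R = k[[x,y,z]]/(ux^3 + vy^3 + wz^3). Then x^3 y^3 ∈ (x^4, y^4, z^4) in R; explicitly x^3 y^3 = (u/v) x^6 + (v/u) y^6 + 2(w^2/(uv)) z^6 modulo the defining relation. -/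
/-- The field `(ℤ/3ℤ)(u,v,w)`. -/
abbrev K3 : Type := FractionRing (MvPolynomial (Fin 3) (ZMod 3))

/-- The indeterminates `u, v, w` viewed inside `(ℤ/3ℤ)(u,v,w)`. -/
noncomputable def uvw (i : Fin 3) : K3 :=
  algebraMap (MvPolynomial (Fin 3) (ZMod 3)) K3 (MvPolynomial.X i)

/-- The defining relation `u x³ + v y³ + w z³` in `K[[x,y,z]]`. -/
noncomputable def rel3 : MvPowerSeries (Fin 3) K3 :=
  MvPowerSeries.C (σ := Fin 3) (R := K3) (uvw 0) * MvPowerSeries.X 0 ^ 3 +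
    MvPowerSeries.C (σ := Fin 3) (R := K3) (uvw 1) * MvPowerSeries.X 1 ^ 3 +
    MvPowerSeries.C (σ := Fin 3) (R := K3) (uvw 2) * MvPowerSeries.X 2 ^ 3

/-! With `a = u x³`, `b = v y³`, `c = w z³` the relation is `a + b + c`, and after multiplying
by `uv` the identity reads `ab = a² + b² + 2c²`. Modulo `a + b + c` we have `c² = (a + b)²`, so
`a² + b² + 2c² = 3a² + 4ab + 3b²`, which is `ab` in characteristic `3`. -/

theorem mk_mul_eq_mk_sq_add_sq_add_two_mul_sq {R : Type*} [CommRing R] (h3 : (3 : R) = 0)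
    (a b c : R) :
    Ideal.Quotient.mk (Ideal.span {a + b + c}) (a * b) =
      Ideal.Quotient.mk (Ideal.span {a + b + c}) (a ^ 2 + b ^ 2 + 2 * c ^ 2) := by
  rw [Ideal.Quotient.eq, Ideal.mem_span_singleton]
  exact ⟨-(a + b - c), by linear_combination (a * b - c ^ 2) * h3⟩

theorem mul_pow_add_mul_pow_add_mul_pow_mem_span_pow {S : Type*} [CommRing S]
    (p q r x y z : S) {m n : ℕ} (hmn : m ≤ n) :
    p * x ^ n + q * y ^ n + r * z ^ n ∈ Ideal.span {x ^ m, y ^ m, z ^ m} := by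
  simp only [← pow_mul_pow_sub _ hmn]
  refine add_mem (add_mem ?_ ?_) ?_ <;>
    exact Ideal.mul_mem_left _ _ (Ideal.mul_mem_right _ _ (Ideal.subset_span (by simp)))

theorem MvPowerSeries.natCast_eq_zero_of_charP {σ K : Type*} [CommRing K] (p : ℕ) [CharP K p] :
    (p : MvPowerSeries σ K) = 0 := by
  rw [← map_natCast (MvPowerSeries.C (σ := σ) (R := K)), CharP.cast_eq_zero, map_zero]

theorem uvw_ne_zero (i : Fin 3) : uvw i ≠ 0 :=
  IsFractionRing.to_map_ne_zero_of_mem_nonZeroDivisors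
    (mem_nonZeroDivisors_of_ne_zero (MvPolynomial.X_ne_zero i))

section

open MvPowerSeries

theorem mk_X_pow_three_mul_X_pow_three :
    Ideal.Quotient.mk (Ideal.span {rel3}) (X 0 ^ 3 * X 1 ^ 3 : MvPowerSeries (Fin 3) K3) =
      Ideal.Quotient.mk (Ideal.span {rel3})
        (C (uvw 0 / uvw 1) * X 0 ^ 6 + C (uvw 1 / uvw 0) * X 1 ^ 6 +
          C (2 * uvw 2 ^ 2 / (uvw 0 * uvw 1)) * X 2 ^ 6) := by
  set u := uvw 0; set v := uvw 1; set w := uvw 2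
  have hu := uvw_ne_zero 0; have hv := uvw_ne_zero 1
  have hC : C (u * v)⁻¹ * C u * C v = (1 : MvPowerSeries (Fin 3) K3) := by
    rw [← map_mul, ← map_mul, mul_assoc, inv_mul_cancel₀ (mul_ne_zero hu hv), map_one]
  have h3 : (3 : MvPowerSeries (Fin 3) K3) = 0 := by exact_mod_cast natCast_eq_zero_of_charP 3
  have key : Ideal.Quotient.mk (Ideal.span {rel3}) ((C u * X 0 ^ 3) * (C v * X 1 ^ 3)) =
      Ideal.Quotient.mk (Ideal.span {rel3})
        ((C u * X 0 ^ 3) ^ 2 + (C v * X 1 ^ 3) ^ 2 + 2 * (C w * X 2 ^ 3) ^ 2) :=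
    mk_mul_eq_mk_sq_add_sq_add_two_mul_sq h3 _ _ _
  calc Ideal.Quotient.mk (Ideal.span {rel3}) (X 0 ^ 3 * X 1 ^ 3)
      = Ideal.Quotient.mk _ (C (u * v)⁻¹ * ((C u * X 0 ^ 3) * (C v * X 1 ^ 3))) := by
        congr 1; linear_combination -(X 0 ^ 3 * X 1 ^ 3) * hC
    _ = Ideal.Quotient.mk _ (C (u * v)⁻¹ *
          ((C u * X 0 ^ 3) ^ 2 + (C v * X 1 ^ 3) ^ 2 + 2 * (C w * X 2 ^ 3) ^ 2)) := by
        rw [map_mul, map_mul _ _ (_ + _), key]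
    _ = _ := by
        congr 1
        rw [show u / v = (u * v)⁻¹ * u ^ 2 by field_simp, show v / u = (u * v)⁻¹ * v ^ 2 by field_simp,
          show 2 * w ^ 2 / (u * v) = (u * v)⁻¹ * (2 * w ^ 2) by field_simp]
        simp only [map_mul, map_pow, map_ofNat]
        ring

end

/-- In `R = (ℤ/3ℤ)(u,v,w)[[x,y,z]]/(ux³+vy³+wz³)` one has
`x³y³ = (u/v)x⁶ + (v/u)y⁶ + 2(w²/(uv))z⁶`, and in particular `x³y³ ∈ (x⁴, y⁴, z⁴)`. -/
theorem cube_cube_mem_span_fourth_powers :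
    (Ideal.Quotient.mk (Ideal.span {rel3}) (MvPowerSeries.X 0 ^ 3 * MvPowerSeries.X 1 ^ 3) =
        Ideal.Quotient.mk (Ideal.span {rel3})
          (MvPowerSeries.C (σ := Fin 3) (R := K3) (uvw 0 / uvw 1) * MvPowerSeries.X 0 ^ 6 +
            MvPowerSeries.C (σ := Fin 3) (R := K3) (uvw 1 / uvw 0) * MvPowerSeries.X 1 ^ 6 +
            MvPowerSeries.C (σ := Fin 3) (R := K3) (2 * uvw 2 ^ 2 / (uvw 0 * uvw 1)) *
              MvPowerSeries.X 2 ^ 6)) ∧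
      Ideal.Quotient.mk (Ideal.span {rel3}) (MvPowerSeries.X 0 ^ 3 * MvPowerSeries.X 1 ^ 3) ∈
        Ideal.span {Ideal.Quotient.mk (Ideal.span {rel3}) (MvPowerSeries.X 0 ^ 4),
          Ideal.Quotient.mk (Ideal.span {rel3}) (MvPowerSeries.X 1 ^ 4),
          Ideal.Quotient.mk (Ideal.span {rel3}) (MvPowerSeries.X 2 ^ 4)} := by
  refine ⟨mk_X_pow_three_mul_X_pow_three, ?_⟩
  rw [mk_X_pow_three_mul_X_pow_three]
  simp only [map_add, map_mul, map_pow]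
  exact mul_pow_add_mul_pow_add_mul_pow_mem_span_pow _ _ _ _ _ _ (by norm_num)
end
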